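/- Let G be a finite connected simple graph with at least one edge that is critical. Then for every minimum vertex cover C of G, there is no bridge of G both of whose endvertices lie in C. -/

import Mathlib

open SimpleGraph

/-- `C` is a vertex cover of `G`: every edge of `G` has an endpoint in `C`. -/
def IsVertexCover {V : Type} (G : SimpleGraph V) (C : Set V) : Prop :=
  ∀ ⦃u v : V⦄, G.Adj u v → u ∈ C ∨ v ∈ C

/-- `C` is a connected vertex cover of `G`: a vertex cover inducing a connected subgraph. -/
def IsConnectedVertexCover {V : Type} (G : SimpleGraph V) (C : Set V) : Prop :=
  _root_.IsVertexCover G C ∧ (G.induce C).Connected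

/-- The vertex cover number `τ(G)`. -/
noncomputable def tau {V : Type} (G : SimpleGraph V) : ℕ :=
  sInf {n | ∃ C : Set V, _root_.IsVertexCover G C ∧ C.ncard = n}

/-- The connected vertex cover number `τ_c(G)`. -/
noncomputable def tauc {V : Type} (G : SimpleGraph V) : ℕ :=
  sInf {n | ∃ C : Set V, IsConnectedVertexCover G C ∧ C.ncard = n}

/-- `G` is critical: every connected proper induced subgraph of `G` with at least one
edge has strictly smaller price of connectivity `τ_c/τ`. -/
def IsCritical {V : Type} (G : SimpleGraph V) : Prop :=
  ∀ S : Set V, S ≠ Set.univ → (G.induce S).Connected → (G.induce S).edgeSet.Nonempty →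
    (tauc (G.induce S) : ℚ) / (tau (G.induce S) : ℚ) < (tauc G : ℚ) / (tau G : ℚ)

/-!
Let `uv` be a bridge with `u, v` in a minimum vertex cover `C`. Deleting `uv` splits `G` into
the shore `A ∋ u` and the shore `B ∋ v`; put `G_A = G[A ∪ {v}]` and `G_B = G[B ∪ {u}]`. Both
are connected, and proper because minimality of `C` gives `u` a neighbour in `A` and `v` one in
`B`. The sets `C ∩ A` and `C ∩ B` cover `G_A` and `G_B`, so `τ(G_A) + τ(G_B) ≤ τ(G)`. Since `v`
is a leaf of `G_A` and `u` is not, every connected vertex cover of `G_A` contains `u`; likewise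
for `G_B` and `v`. Gluing minimum connected covers of `G_A` and `G_B` along `uv` therefore gives
`τ_c(G) ≤ τ_c(G_A) + τ_c(G_B)`, so `τ_c(G)/τ(G)` is at most one of the ratios of `G_A` and `G_B`,
against criticality.
-/

lemma div_le_max_div {K : Type*} [Field K] [LinearOrder K] [IsStrictOrderedRing K]
    {t t₁ t₂ s s₁ s₂ : K} (ht : 0 ≤ t) (ht₁₂ : t ≤ t₁ + t₂) (hs₁ : 0 < s₁) (hs₂ : 0 < s₂)
    (hs : s₁ + s₂ ≤ s) : t / s ≤ max (t₁ / s₁) (t₂ / s₂) := by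
  by_contra! h
  rw [max_lt_iff, div_lt_div_iff₀ hs₁ (by linarith), div_lt_div_iff₀ hs₂ (by linarith)] at h
  nlinarith [mul_le_mul_of_nonneg_left hs ht,
    mul_le_mul_of_nonneg_right ht₁₂ (by linarith : 0 ≤ s)]

variable {V : Type} {G : SimpleGraph V}

lemma tau_le_ncard {C : Set V} (h : _root_.IsVertexCover G C) : tau G ≤ C.ncard :=
  Nat.sInf_le ⟨C, h, rfl⟩

lemma tauc_le_ncard {C : Set V} (h : IsConnectedVertexCover G C) : tauc G ≤ C.ncard :=
  Nat.sInf_le ⟨C, h, rfl⟩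

lemma exists_isVertexCover_ncard_eq_tau (G : SimpleGraph V) :
    ∃ C, _root_.IsVertexCover G C ∧ C.ncard = tau G :=
  Nat.sInf_mem (s := {n | ∃ C : Set V, _root_.IsVertexCover G C ∧ C.ncard = n})
    ⟨_, Set.univ, fun _ _ _ => Or.inl trivial, rfl⟩

lemma SimpleGraph.Connected.exists_isConnectedVertexCover_ncard_eq_tauc (h : G.Connected) :
    ∃ C, IsConnectedVertexCover G C ∧ C.ncard = tauc G :=
  Nat.sInf_mem (s := {n | ∃ C : Set V, IsConnectedVertexCover G C ∧ C.ncard = n}) ⟨_, Set.univ,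
    ⟨fun _ _ _ => Or.inl trivial, (induceUnivIso G).connected_iff.mpr h⟩, rfl⟩

lemma tau_pos [Finite V] (he : G.edgeSet.Nonempty) : 0 < tau G := by
  obtain ⟨e, he⟩ := he
  induction e using Sym2.ind with
  | h x y =>
    obtain ⟨C, hC, hCtau⟩ := exists_isVertexCover_ncard_eq_tau G
    rw [← hCtau, Set.ncard_pos]
    exact (hC he).elim (fun h => ⟨x, h⟩) fun h => ⟨y, h⟩

lemma tau_induce_le {S C : Set V} (hCS : C ⊆ S)
    (hC : ∀ ⦃x y⦄, x ∈ S → y ∈ S → G.Adj x y → x ∈ C ∨ y ∈ C) :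
    tau (G.induce S) ≤ C.ncard := by
  rw [← Set.ncard_preimage_of_injective_subset_range (f := ((↑) : S → V)) (s := C)
    Subtype.val_injective (by rwa [Subtype.range_val])]
  exact tau_le_ncard fun x y hxy => hC x.2 y.2 hxy

lemma IsVertexCover.exists_adj_notMem [Finite V] {C : Set V} (hC : _root_.IsVertexCover G C)
    (hmin : C.ncard = tau G) {u : V} (hu : u ∈ C) : ∃ a, G.Adj u a ∧ a ∉ C := by
  by_contra! h
  have hcov : _root_.IsVertexCover G (C \ {u}) := by
    intro x y hxy
    rcases eq_or_ne x u with rfl | hx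
    · exact Or.inr ⟨h y hxy, hxy.ne'⟩
    rcases eq_or_ne y u with rfl | hy
    · exact Or.inl ⟨h x hxy.symm, hxy.ne⟩
    exact (hC hxy).imp (fun h => ⟨h, hx⟩) fun h => ⟨h, hy⟩
  have := tau_le_ncard hcov
  have := Set.ncard_sdiff_singleton_lt_of_mem hu
  omega

lemma IsVertexCover.image_val {S : Set V} {D : Set S} (hD : _root_.IsVertexCover (G.induce S) D)
    {x y : V} (hx : x ∈ S) (hy : y ∈ S) (hxy : G.Adj x y) :
    x ∈ Subtype.val '' D ∨ y ∈ Subtype.val '' D :=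
  (hD (show (G.induce S).Adj ⟨x, hx⟩ ⟨y, hy⟩ from hxy)).imp (fun h => ⟨_, h, rfl⟩)
    fun h => ⟨_, h, rfl⟩

lemma SimpleGraph.Connected.induce_image_val {S : Set V} {D : Set S}
    (h : ((G.induce S).induce D).Connected) : (G.induce (Subtype.val '' D)).Connected :=
  h.map ⟨fun z => ⟨z.1.1, z.1, z.2, rfl⟩, fun hz => hz⟩
    (by rintro ⟨_, z, hz, rfl⟩; exact ⟨⟨z, hz⟩, rfl⟩)

lemma IsConnectedVertexCover.mem_of_forall_adj_eq {D : Set V} (hD : IsConnectedVertexCover G D)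
    {u v a : V} (hleaf : ∀ z, G.Adj v z → z = u) (huv : G.Adj u v) (hua : G.Adj u a)
    (hav : a ≠ v) : u ∈ D := by
  by_contra hu
  have hvD : v ∈ D := (hD.1 huv).resolve_left hu
  have haD : a ∈ D := (hD.1 hua).resolve_left hu
  have : Nontrivial D := Set.nontrivial_coe_sort.mpr ⟨v, hvD, a, haD, hav.symm⟩
  obtain ⟨z, hz⟩ := hD.2.preconnected.exists_adj_of_nontrivial ⟨v, hvD⟩
  exact hu (hleaf _ hz ▸ z.2)

namespace SimpleGraph

def shore (G : SimpleGraph V) (u v : V) : Set V :=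
  {x | (G.deleteEdges {s(u, v)}).Reachable u x}

variable {u v a x y : V}

lemma mem_shore_self : u ∈ G.shore u v := Reachable.refl u

lemma mem_shore_of_adj (hx : x ∈ G.shore u v) (hxy : G.Adj x y) :
    y ∈ G.shore u v ∨ s(x, y) = s(u, v) := by
  by_cases h : s(x, y) = s(u, v)
  · exact Or.inr h
  · exact Or.inl (hx.trans (Adj.reachable (by simp [deleteEdges_adj, hxy, h])))

lemma mem_shore_of_adj_of_ne (hua : G.Adj u a) (hav : a ≠ v) : a ∈ G.shore u v :=
  (mem_shore_of_adj mem_shore_self hua).resolve_right (mt Sym2.congr_right.mp hav)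

lemma mem_shore_or_mem_shore_of_adj (hx : x ∈ G.shore u v) (hxy : G.Adj x y) :
    y ∈ G.shore u v ∨ y ∈ G.shore v u := by
  rcases mem_shore_of_adj hx hxy with hy | h
  · exact Or.inl hy
  rcases Sym2.mem_iff.mp (h ▸ Sym2.mem_mk_right x y) with rfl | rfl
  · exact Or.inl mem_shore_self
  · exact Or.inr mem_shore_self

lemma Connected.mem_shore_or_mem_shore (hconn : G.Connected) (u v x : V) :
    x ∈ G.shore u v ∨ x ∈ G.shore v u := by
  induction (reachable_iff_reflTransGen u x).mp (hconn u x) with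
  | refl => exact Or.inl mem_shore_self
  | tail _ hyz ih =>
    rcases ih with h | h
    · exact mem_shore_or_mem_shore_of_adj h hyz
    · exact (mem_shore_or_mem_shore_of_adj h hyz).symm

lemma mem_or_mem_of_adj_of_mem_shore {D : Set V} (hu : u ∈ D)
    (hD : ∀ ⦃x y⦄, x ∈ G.shore u v → y ∈ G.shore u v → G.Adj x y → x ∈ D ∨ y ∈ D)
    (hx : x ∈ G.shore u v) (hxy : G.Adj x y) : x ∈ D ∨ y ∈ D := by
  rcases mem_shore_of_adj hx hxy with hy | h
  · exact hD hx hy hxy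
  rcases Sym2.eq_iff.mp h with ⟨rfl, -⟩ | ⟨-, rfl⟩
  · exact Or.inl hu
  · exact Or.inr hu

lemma Connected.isVertexCover_union (hconn : G.Connected) {DA DB : Set V} (hu : u ∈ DA)
    (hv : v ∈ DB)
    (hA : ∀ ⦃x y⦄, x ∈ G.shore u v → y ∈ G.shore u v → G.Adj x y → x ∈ DA ∨ y ∈ DA)
    (hB : ∀ ⦃x y⦄, x ∈ G.shore v u → y ∈ G.shore v u → G.Adj x y → x ∈ DB ∨ y ∈ DB) :
    _root_.IsVertexCover G (DA ∪ DB) := by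
  intro x y hxy
  rcases hconn.mem_shore_or_mem_shore u v x with hx | hx
  · exact (mem_or_mem_of_adj_of_mem_shore hu hA hx hxy).imp Or.inl Or.inl
  · exact (mem_or_mem_of_adj_of_mem_shore hv hB hx hxy).imp Or.inr Or.inr

lemma connected_induce_shore (G : SimpleGraph V) (u v : V) :
    (G.induce (G.shore u v)).Connected := by
  have h := (((G.deleteEdges {s(u, v)}).connectedComponentMk u).maximal_connected_induce_supp).1
  have hsupp : ((G.deleteEdges {s(u, v)}).connectedComponentMk u).supp = G.shore u v := by
    ext x
    simp [shore, ConnectedComponent.mem_supp_iff, reachable_comm]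
  rw [hsupp] at h
  exact h.mono fun _ _ hxy => G.deleteEdges_le {s(u, v)} hxy

lemma connected_induce_insert_shore (huv : G.Adj u v) :
    (G.induce (insert v (G.shore u v))).Connected := by
  rw [Set.insert_eq]
  exact connected_induce_union Preconnected.of_subsingleton
    (G.connected_induce_shore u v).preconnected rfl mem_shore_self huv.symm

lemma edgeSet_induce_insert_shore_nonempty (huv : G.Adj u v) :
    (G.induce (insert v (G.shore u v))).edgeSet.Nonempty :=
  ⟨s(⟨u, Set.mem_insert_of_mem _ mem_shore_self⟩, ⟨v, Set.mem_insert _ _⟩), huv⟩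

namespace IsBridge

variable (hbr : G.IsBridge s(u, v))
include hbr

lemma symm : G.IsBridge s(v, u) := Sym2.eq_swap ▸ hbr

lemma notMem_shore : v ∉ G.shore u v := hbr

lemma eq_of_adj (hy : y ∈ G.shore u v) (h : G.Adj y v) : y = u := by
  rcases mem_shore_of_adj hy h with hv | hs
  · exact absurd hv hbr.notMem_shore
  rcases Sym2.eq_iff.mp hs with ⟨h₁, -⟩ | ⟨h₁, h₂⟩
  · exact h₁
  · exact h₁.trans h₂

lemma disjoint_shore : Disjoint (G.shore u v) (G.shore v u) :=
  Set.disjoint_left.mpr fun _ hu hv => hbr (hu.trans (by rw [Sym2.eq_swap]; exact hv.symm))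

lemma insert_shore_ne_univ {b : V} (hvb : G.Adj v b) (hbu : b ≠ u) :
    insert v (G.shore u v) ≠ Set.univ := by
  intro h
  rcases h.symm ▸ Set.mem_univ b with rfl | hb
  · exact hvb.ne rfl
  · exact hbr.disjoint_shore.notMem_of_mem_left hb (mem_shore_of_adj_of_ne hvb hbu)

lemma tau_induce_insert_shore_le {C : Set V} (hC : _root_.IsVertexCover G C) (hu : u ∈ C) :
    tau (G.induce (insert v (G.shore u v))) ≤ (C ∩ G.shore u v).ncard := by
  refine tau_induce_le (Set.inter_subset_right.trans (Set.subset_insert _ _)) ?_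
  rintro x y (rfl | hx) (rfl | hy) hxy
  · exact absurd rfl hxy.ne
  · obtain rfl := hbr.eq_of_adj hy hxy.symm
    exact Or.inr ⟨hu, mem_shore_self⟩
  · obtain rfl := hbr.eq_of_adj hx hxy
    exact Or.inl ⟨hu, mem_shore_self⟩
  · exact (hC hxy).imp (fun h => ⟨h, hx⟩) fun h => ⟨h, hy⟩

lemma tau_add_tau_le [Finite V] {C : Set V} (hC : _root_.IsVertexCover G C) (hu : u ∈ C)
    (hv : v ∈ C) :
    tau (G.induce (insert v (G.shore u v))) + tau (G.induce (insert u (G.shore v u))) ≤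
      C.ncard :=
  calc _ ≤ (C ∩ G.shore u v).ncard + (C ∩ G.shore v u).ncard :=
        add_le_add (hbr.tau_induce_insert_shore_le hC hu)
          (hbr.symm.tau_induce_insert_shore_le hC hv)
    _ = (C ∩ G.shore u v ∪ C ∩ G.shore v u).ncard :=
        (Set.ncard_union_eq (hbr.disjoint_shore.mono Set.inter_subset_right
          Set.inter_subset_right)).symm
    _ ≤ C.ncard := Set.ncard_le_ncard (Set.union_subset Set.inter_subset_left
        Set.inter_subset_left)

lemma exists_connected_cover_insert_shore (huv : G.Adj u v) (hua : G.Adj u a) (hav : a ≠ v) :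
    ∃ E : Set V, u ∈ E ∧ (G.induce E).Connected ∧
      (∀ ⦃x y⦄, x ∈ G.shore u v → y ∈ G.shore u v → G.Adj x y → x ∈ E ∨ y ∈ E) ∧
      E.ncard = tauc (G.induce (insert v (G.shore u v))) := by
  obtain ⟨D, hD, hDcard⟩ :=
    (connected_induce_insert_shore huv).exists_isConnectedVertexCover_ncard_eq_tauc
  have hleaf : ∀ z, (G.induce (insert v (G.shore u v))).Adj ⟨v, Set.mem_insert _ _⟩ z →
      z = ⟨u, Set.mem_insert_of_mem _ mem_shore_self⟩ := by
    rintro ⟨z, rfl | hz⟩ hvz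
    · exact absurd rfl hvz.ne
    · exact Subtype.ext (hbr.eq_of_adj hz (show G.Adj v z from hvz).symm)
  have huD := hD.mem_of_forall_adj_eq hleaf huv
    (show (G.induce _).Adj _ ⟨a, Set.mem_insert_of_mem _ (mem_shore_of_adj_of_ne hua hav)⟩
      from hua)
    (fun h => hav (congrArg Subtype.val h))
  refine ⟨Subtype.val '' D, ⟨_, huD, rfl⟩, hD.2.induce_image_val,
    fun x y hx hy hxy => hD.1.image_val (Set.mem_insert_of_mem _ hx)
      (Set.mem_insert_of_mem _ hy) hxy, ?_⟩
  rw [Set.ncard_image_of_injective _ Subtype.val_injective, hDcard]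

lemma tauc_le_add (hconn : G.Connected) {b : V} (hua : G.Adj u a) (hav : a ≠ v)
    (hvb : G.Adj v b) (hbu : b ≠ u) :
    tauc G ≤ tauc (G.induce (insert v (G.shore u v))) +
      tauc (G.induce (insert u (G.shore v u))) := by
  have huv : G.Adj u v := hbr.reachable_iff_adj.mp (hconn u v)
  obtain ⟨EA, huA, hA, hAcov, hAcard⟩ := hbr.exists_connected_cover_insert_shore huv hua hav
  obtain ⟨EB, hvB, hB, hBcov, hBcard⟩ :=
    hbr.symm.exists_connected_cover_insert_shore huv.symm hvb hbu
  calc tauc G ≤ (EA ∪ EB).ncard :=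
        tauc_le_ncard ⟨hconn.isVertexCover_union huA hvB hAcov hBcov,
          connected_induce_union hA.preconnected hB.preconnected huA hvB huv⟩
    _ ≤ EA.ncard + EB.ncard := Set.ncard_union_le _ _
    _ = _ := by rw [hAcard, hBcard]

end IsBridge

end SimpleGraph

theorem critical_no_bridge_in_cover_general {V : Type} [Fintype V] (G : SimpleGraph V)
    (hconn : G.Connected) (hcrit : IsCritical G) :
    ∀ C : Set V, _root_.IsVertexCover G C → C.ncard = tau G →
      ∀ u ∈ C, ∀ v ∈ C, ¬ G.IsBridge s(u, v) := by
  intro C hC hCmin u hu v hv hbr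
  have huv : G.Adj u v := hbr.reachable_iff_adj.mp (hconn u v)
  obtain ⟨a, hua, haC⟩ := hC.exists_adj_notMem hCmin hu
  obtain ⟨b, hvb, hbC⟩ := hC.exists_adj_notMem hCmin hv
  have hav : a ≠ v := fun h => haC (h ▸ hv)
  have hbu : b ≠ u := fun h => hbC (h ▸ hu)
  have hA := hcrit _ (hbr.insert_shore_ne_univ hvb hbu) (connected_induce_insert_shore huv)
    (edgeSet_induce_insert_shore_nonempty huv)
  have hB := hcrit _ (hbr.symm.insert_shore_ne_univ hua hav)
    (connected_induce_insert_shore huv.symm) (edgeSet_induce_insert_shore_nonempty huv.symm)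
  refine (max_lt hA hB).not_ge (div_le_max_div (Nat.cast_nonneg _) ?_ ?_ ?_ ?_)
  · exact_mod_cast hbr.tauc_le_add hconn hua hav hvb hbu
  · exact_mod_cast tau_pos (edgeSet_induce_insert_shore_nonempty huv)
  · exact_mod_cast tau_pos (edgeSet_induce_insert_shore_nonempty huv.symm)
  · exact_mod_cast hCmin ▸ hbr.tau_add_tau_le hC hu hv

/-- If `G` is a finite connected graph with at least one edge that is critical, then
for every minimum vertex cover `C` of `G` there is no bridge of `G` with both
endvertices in `C`. -/
theorem critical_no_bridge_in_cover {V : Type} [Fintype V] (G : SimpleGraph V)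
    (hconn : G.Connected) (hedge : G.edgeSet.Nonempty) (hcrit : IsCritical G) :
    ∀ C : Set V, _root_.IsVertexCover G C → C.ncard = tau G →
      ∀ u ∈ C, ∀ v ∈ C, ¬ G.IsBridge s(u, v) :=
  critical_no_bridge_in_cover_general G hconn hcrit
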